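/- arXiv:2311.15910 — 2 statements merged into one kernel-verified Lean document; each statement's English description precedes it below -/
import Mathlib

section
/- Let n ≥ 2 be an integer, K a field, and R_n the rose graph with n petals. Let P and Q be elements of GL_n(L_K(R_n)_0) with P φ_P(Q) = I_n, and for m ≥ 1 write P_m = (p^{(m)}_{ij}), P_m^{-1} = (p^{(-m)}_{ij}), Q_m = (q^{(m)}_{ij}) and Q_m^{-1} = (q^{(-m)}_{ij}). Then the graded injective K-algebra homomorphism θ_P : L_K(R_n) → L_K(R_n)^{φ_P} (determined by θ_P(v) = v, θ_P(e_i) = e_i and θ_P(e_i*) = Σ_{k=1}^n q^{(-1)}_{ik} e_k*) is an isomorphism if and only if p^{(-m)}_{ij}, q^{(m)}_{ij} and q^{(-m)}_{ij} belong to the image of θ_P for all m ≥ 1 and all 1 ≤ i, j ≤ n. -/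
/-- Generators of the Leavitt path algebra of the rose with `n` petals:
the edges `e_1, …, e_n` and the ghost edges `e_1*, …, e_n*` (the single vertex `v` is the
identity `1`). -/
inductive RGen (n : ℕ) : Type
  | e : Fin n → RGen n
  | g : Fin n → RGen n

/-- The defining relations of `L_K(R_n)`: `e_i* e_j = δ_{ij} v` and `Σ_i e_i e_i* = v`,
where `v = 1`. -/
inductive RoseRel (K : Type) [Field K] (n : ℕ) :
    FreeAlgebra K (RGen n) → FreeAlgebra K (RGen n) → Prop
  | ghostEdgeSame (i : Fin n) :
      RoseRel K n (FreeAlgebra.ι K (RGen.g i) * FreeAlgebra.ι K (RGen.e i)) 1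
  | ghostEdgeNe (i j : Fin n) (h : i ≠ j) :
      RoseRel K n (FreeAlgebra.ι K (RGen.g i) * FreeAlgebra.ι K (RGen.e j)) 0
  | ck2 :
      RoseRel K n (∑ i : Fin n, FreeAlgebra.ι K (RGen.e i) * FreeAlgebra.ι K (RGen.g i)) 1

/-- The Leavitt path algebra `L_K(R_n)` of the rose with `n` petals. -/
abbrev LRose (K : Type) [Field K] (n : ℕ) : Type := RingQuot (RoseRel K n)

/-- The edge `e_i` as an element of `L_K(R_n)`. -/
noncomputable def ee (K : Type) [Field K] (n : ℕ) (i : Fin n) : LRose K n :=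
  RingQuot.mkAlgHom K (RoseRel K n) (FreeAlgebra.ι K (RGen.e i))

/-- The ghost edge `e_i*` as an element of `L_K(R_n)`. -/
noncomputable def gg (K : Type) [Field K] (n : ℕ) (i : Fin n) : LRose K n :=
  RingQuot.mkAlgHom K (RoseRel K n) (FreeAlgebra.ι K (RGen.g i))

/-- The degree `d` component of the ℤ-grading of `L_K(R_n)`: the `K`-span of the
elements `p q*` with `|p| - |q| = d`. -/
noncomputable def rComponent (K : Type) [Field K] (n : ℕ) (d : ℤ) :
    Submodule K (LRose K n) :=
  Submodule.span K {x : LRose K n | ∃ p q : List (Fin n),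
    (p.length : ℤ) - (q.length : ℤ) = d ∧
    x = (p.map (ee K n)).prod * (q.reverse.map (gg K n)).prod}

/-- A map is graded when it preserves every homogeneous component. -/
def RGraded (K : Type) [Field K] (n : ℕ) (f : LRose K n → LRose K n) : Prop :=
  ∀ d : ℤ, ∀ x ∈ rComponent K n d, f x ∈ rComponent K n d

/-- The defining property of the endomorphism `φ_P` of `L_K(R_n)` attached to a matrix
`P` with inverse `P'`: it sends `e_i ↦ Σ_k e_k p_{k i}` and `e_i* ↦ Σ_k p'_{i k} e_k*`
(and `v = 1 ↦ 1` automatically). -/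
def RPhiProps (K : Type) [Field K] (n : ℕ) (P P' : Matrix (Fin n) (Fin n) (LRose K n))
    (φ : LRose K n →ₐ[K] LRose K n) : Prop :=
  (∀ i, φ (ee K n i) = ∑ k, ee K n k * P k i) ∧
  (∀ i, φ (gg K n i) = ∑ k, P' i k * gg K n k)


/-!
Only the converse needs proof. Write `σ = φ_P` (so `σ⁻¹ = φ_Q`) and `J_d = θ(L_d)`. Twisted
multiplicativity of `θ` gives `J_m σ^m(J_e) ⊆ J_{m+e}` and `J_{-m} σ^{-m}(J_e) ⊆ J_{e-m}` for
`m ≥ 0`, and since `θ` is graded, a degree-zero element of its image lies in `J_0`. Hence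
`e_i ∈ J_1`, `e_i* = Σ_k q_{ik} θ(e_k*) ∈ J_{-1}`, and induction on the length of words, using
`σ^{-t}(e_i) = Σ_k e_k q^{(t)}_{ki}` (with `σ^{-1}(Q_t) = Q^{-1} Q_{t+1}`),
`σ^s(e_j*) = Σ_l p^{(-s)}_{jl} e_l*` and `σ^{-t}(e_j*) = Σ_l q^{(-t)}_{jl} e_l*`, shows that
`σ^{-t}(e_p)`, `σ^s(e_q*)` and `σ^{-t}(e_q*)` lie in the image for all `s, t ≥ 0`. Finally
`e_p e_q* = e_p σ^{|p|}(σ^{-|p|}(e_q*)) ∈ J_{|p|-|q|}`, and these monomials span `L_K(R_n)`.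
-/

open Function
open scoped Matrix

section Grading

variable (K : Type) [Field K] (n : ℕ)

theorem gg_mul_ee (i j : Fin n) : gg K n i * ee K n j = if i = j then 1 else 0 := by
  unfold gg ee
  rw [← map_mul]
  split_ifs with h
  · subst h
    rw [RingQuot.mkAlgHom_rel K (RoseRel.ghostEdgeSame i), map_one]
  · rw [RingQuot.mkAlgHom_rel K (RoseRel.ghostEdgeNe i j h), map_zero]

theorem sum_ee_mul_gg : ∑ i : Fin n, ee K n i * gg K n i = 1 := by
  unfold gg ee
  simp only [← map_mul]
  rw [← map_sum, RingQuot.mkAlgHom_rel K RoseRel.ck2, map_one]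

theorem subalgebra_eq_top_of_ee_mem_of_gg_mem (S : Subalgebra K (LRose K n))
    (he : ∀ i, ee K n i ∈ S) (hg : ∀ i, gg K n i ∈ S) : S = ⊤ := by
  refine Algebra.eq_top_iff.2 fun x => ?_
  obtain ⟨y, rfl⟩ := RingQuot.mkAlgHom_surjective K (RoseRel K n) x
  induction y using FreeAlgebra.induction with
  | grade0 r => rw [AlgHom.commutes]; exact S.algebraMap_mem r
  | grade1 x => cases x with
    | e i => exact he i
    | g i => exact hg i
  | mul a b ha hb => rw [map_mul]; exact S.mul_mem ha hb
  | add a b ha hb => rw [map_add]; exact S.add_mem ha hb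

variable {K n}

theorem monomial_mem_rComponent (p q : List (Fin n)) :
    (p.map (ee K n)).prod * (q.reverse.map (gg K n)).prod ∈
      rComponent K n (p.length - q.length) :=
  Submodule.subset_span ⟨p, q, rfl, rfl⟩

theorem ee_mem_rComponent (i : Fin n) : ee K n i ∈ rComponent K n 1 :=
  Submodule.subset_span ⟨[i], [], rfl, by simp⟩

theorem gg_mem_rComponent (i : Fin n) : gg K n i ∈ rComponent K n (-1) :=
  Submodule.subset_span ⟨[], [i], rfl, by simp⟩

theorem list_prod_mul_mem_rComponent {ι : Type} (f : ι → LRose K n) (δ : ι → ℤ)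
    (hf : ∀ a {e y}, y ∈ rComponent K n e → f a * y ∈ rComponent K n (δ a + e)) (l : List ι)
    {e : ℤ} {y : LRose K n} (hy : y ∈ rComponent K n e) :
    (l.map f).prod * y ∈ rComponent K n ((l.map δ).sum + e) := by
  induction l with
  | nil => simpa using hy
  | cons a l ih =>
    rw [List.map_cons, List.map_cons, List.prod_cons, List.sum_cons, mul_assoc, add_assoc]
    exact hf _ ih

theorem ee_mul_mem_rComponent (i : Fin n) (d : ℤ) {x : LRose K n}
    (hx : x ∈ rComponent K n d) : ee K n i * x ∈ rComponent K n (1 + d) := by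
  refine (Submodule.span_le (p := (rComponent K n (1 + d)).comap (LinearMap.mulLeft K _))).2 ?_ hx
  rintro _ ⟨p, q, rfl, rfl⟩
  have := monomial_mem_rComponent (K := K) (i :: p) q
  rw [List.map_cons, List.prod_cons, mul_assoc, List.length_cons] at this
  simp only [SetLike.mem_coe, Submodule.mem_comap, LinearMap.mulLeft_apply]
  convert this using 2
  push_cast; ring

theorem gg_mul_mem_rComponent (i : Fin n) (d : ℤ) {x : LRose K n}
    (hx : x ∈ rComponent K n d) : gg K n i * x ∈ rComponent K n (-1 + d) := by
  refine (Submodule.span_le (p := (rComponent K n (-1 + d)).comap (LinearMap.mulLeft K _))).2 ?_ hx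
  rintro _ ⟨p, q, rfl, rfl⟩
  cases p with
  | nil =>
    have := monomial_mem_rComponent (K := K) [] (q ++ [i])
    simp only [List.map_nil, List.prod_nil, one_mul, List.reverse_append, List.length_nil,
      List.length_append] at this
    simpa [sub_add_eq_add_sub, neg_add_eq_sub] using this
  | cons j p =>
    simp only [SetLike.mem_coe, Submodule.mem_comap, LinearMap.mulLeft_apply, List.map_cons,
      List.prod_cons, ← mul_assoc, gg_mul_ee]
    split_ifs with h
    · rw [one_mul]
      convert monomial_mem_rComponent p q using 2
      simp only [List.length_cons]; push_cast; ring
    · simp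

instance rComponent.gradedMonoid : SetLike.GradedMonoid (rComponent K n) where
  one_mem := Submodule.subset_span ⟨[], [], rfl, by simp⟩
  mul_mem d e x y hx hy := by
    refine (Submodule.span_le (p := (rComponent K n (d + e)).comap (LinearMap.mulRight K y))).2
      ?_ hx
    rintro _ ⟨p, q, rfl, rfl⟩
    have hgy := list_prod_mul_mem_rComponent _ (fun _ => -1)
      (fun i => gg_mul_mem_rComponent i _) q.reverse hy
    have := list_prod_mul_mem_rComponent _ (fun _ => 1) (fun i => ee_mul_mem_rComponent i _) p hgy
    rw [← mul_assoc] at this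
    convert this using 2
    simp [sub_eq_add_neg, add_assoc]

theorem rComponent_le {F : ℤ → Submodule K (LRose K n)} [SetLike.GradedMonoid F]
    (he : ∀ i, ee K n i ∈ F 1) (hg : ∀ i, gg K n i ∈ F (-1)) (d : ℤ) :
    rComponent K n d ≤ F d := by
  refine Submodule.span_le.2 ?_
  rintro _ ⟨p, q, rfl, rfl⟩
  have := SetLike.mul_mem_graded (SetLike.list_prod_map_mem_graded p (fun _ => 1) _ fun i _ => he i)
    (SetLike.list_prod_map_mem_graded q.reverse (fun _ => -1) _ fun i _ => hg i)
  simpa [sub_eq_add_neg] using this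

variable (K n) in
theorem iSup_rComponent_eq_top : ⨆ d, rComponent K n d = ⊤ := by
  have h := Submodule.iSup_eq_toSubmodule_range (rComponent K n)
  rw [h, subalgebra_eq_top_of_ee_mem_of_gg_mem K n (DirectSum.coeAlgHom _).range
    (fun i => ?_) (fun i => ?_), Algebra.top_toSubmodule]
  · have := Submodule.mem_iSup_of_mem 1 (ee_mem_rComponent (K := K) i)
    rwa [h] at this
  · have := Submodule.mem_iSup_of_mem (-1) (gg_mem_rComponent (K := K) i)
    rwa [h] at this

end Grading

section Projection

variable (K : Type) [Field K] (n : ℕ)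

open AddMonoidAlgebra in
/-- The relations are homogeneous, so `e_i ↦ e_i t` and `e_i* ↦ e_i* t⁻¹` define a coaction
`L → L[t, t⁻¹]`; its coefficients are the homogeneous components. -/
noncomputable def gradingHom : LRose K n →ₐ[K] AddMonoidAlgebra (LRose K n) ℤ :=
  RingQuot.liftAlgHom K ⟨FreeAlgebra.lift K fun
    | RGen.e i => single 1 (ee K n i)
    | RGen.g i => single (-1) (gg K n i), by
      intro x y h
      induction h with
      | ghostEdgeSame i =>
        simp only [map_mul, map_one, FreeAlgebra.lift_ι_apply, single_mul_single, gg_mul_ee,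
          if_pos, neg_add_cancel, one_def]
      | ghostEdgeNe i j hij =>
        simp only [map_mul, map_zero, FreeAlgebra.lift_ι_apply, single_mul_single, gg_mul_ee,
          if_neg hij, AddMonoidAlgebra.single_zero]
      | ck2 =>
        simp only [map_sum, map_mul, map_one, FreeAlgebra.lift_ι_apply, single_mul_single,
          add_neg_cancel]
        rw [one_def, ← sum_ee_mul_gg]
        exact (map_sum (singleAddHom 0) _ _).symm⟩

variable {K n}

theorem gradingHom_of_mem {d : ℤ} {x : LRose K n} (hx : x ∈ rComponent K n d) :
    gradingHom K n x = AddMonoidAlgebra.single d x := by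
  let F : ℤ → Submodule K (LRose K n) := fun d =>
    LinearMap.eqLocus (gradingHom K n).toLinearMap (AddMonoidAlgebra.lsingle d)
  have : SetLike.GradedMonoid F :=
    { one_mem := show gradingHom K n 1 = AddMonoidAlgebra.single 0 1 by
        rw [map_one, AddMonoidAlgebra.one_def]
      mul_mem := fun d e x y (hx : gradingHom K n x = AddMonoidAlgebra.single d x)
          (hy : gradingHom K n y = AddMonoidAlgebra.single e y) =>
        show gradingHom K n (x * y) = AddMonoidAlgebra.single (d + e) (x * y) by
          rw [map_mul, hx, hy, AddMonoidAlgebra.single_mul_single] }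
  refine rComponent_le (F := F) (fun i => ?_) (fun i => ?_) d hx
  all_goals simp only [F, LinearMap.mem_eqLocus, AlgHom.toLinearMap_apply,
    AddMonoidAlgebra.lsingle_apply, gradingHom, ee, gg, RingQuot.liftAlgHom_mkAlgHom_apply,
    FreeAlgebra.lift_ι_apply]

variable (K n) in
noncomputable def gradingProj (d : ℤ) : LRose K n →ₗ[K] LRose K n :=
  Finsupp.lapply d ∘ₗ (AddMonoidAlgebra.coeffLinearEquiv K).toLinearMap ∘ₗ
    (gradingHom K n).toLinearMap

theorem gradingProj_of_mem {d e : ℤ} {x : LRose K n} (hx : x ∈ rComponent K n e) :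
    gradingProj K n d x = if e = d then x else 0 := by
  simp only [gradingProj, LinearMap.comp_apply, AlgHom.toLinearMap_apply, gradingHom_of_mem hx,
    LinearEquiv.coe_coe, AddMonoidAlgebra.coeffLinearEquiv_apply, AddMonoidAlgebra.coeff_single,
    Finsupp.lapply_apply, Finsupp.single_apply]

theorem mem_map_rComponent_of_mem_range {θ : LRose K n →ₗ[K] LRose K n}
    (hgr : ∀ d, ∀ x ∈ rComponent K n d, θ x ∈ rComponent K n d) {d : ℤ} {z : LRose K n}
    (hz : z ∈ rComponent K n d) (hzθ : z ∈ Set.range θ) : z ∈ (rComponent K n d).map θ := by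
  obtain ⟨x, rfl⟩ := hzθ
  have hx : x ∈ ⨆ e, rComponent K n e := by simp [iSup_rComponent_eq_top]
  have hproj : gradingProj K n d (θ x) = θ x := by rw [gradingProj_of_mem hz, if_pos rfl]
  rw [← hproj]
  clear hproj hz
  induction hx using Submodule.iSup_induction' with
  | mem e x hx =>
    rw [gradingProj_of_mem (hgr e x hx)]
    split_ifs with h
    · exact Submodule.mem_map_of_mem (h ▸ hx)
    · exact zero_mem _
  | zero => simp
  | add x y _ _ hx hy => simpa using add_mem hx hy

end Projection

section TwistedPowers

/- `A m = M f(M) ⋯ f^{m-1}(M)` and its inverse `f^{m-1}(M') ⋯ f(M') M'`, specified by their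
recursions. -/

variable {ι R : Type} [Fintype ι] [Semiring R]

theorem twistedPow_succ_eq_mul_map (f : R →+* R) {M : Matrix ι ι R} {A : ℕ → Matrix ι ι R}
    (h1 : A 1 = M) (hS : ∀ m, 1 ≤ m → A (m + 1) = A m * M.map f^[m]) :
    ∀ m, 1 ≤ m → A (m + 1) = M * (A m).map f := by
  intro m hm
  induction m, hm using Nat.le_induction with
  | base => rw [hS 1 le_rfl, h1, iterate_one]
  | succ m hm ih =>
    conv_lhs => rw [hS (m + 1) (by omega), ih]
    rw [hS m hm, Matrix.map_mul, Matrix.map_map, ← iterate_succ', mul_assoc]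

theorem twistedPow_mem_matrix [DecidableEq ι] (S : Subsemiring R) {f : R → R}
    (hf : Set.MapsTo f S S)
    {M : Matrix ι ι R} (hM : M ∈ S.matrix) {A : ℕ → Matrix ι ι R} (h1 : A 1 = M)
    (hS : ∀ m, 1 ≤ m → A (m + 1) = A m * M.map f^[m]) : ∀ m, 1 ≤ m → A m ∈ S.matrix := by
  intro m hm
  induction m, hm using Nat.le_induction with
  | base => rwa [h1]
  | succ m hm ih => rw [hS m hm]; exact mul_mem ih fun i j => hf.iterate m (hM i j)

theorem twistedPowInv_mem_matrix [DecidableEq ι] (S : Subsemiring R) {f : R → R}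
    (hf : Set.MapsTo f S S)
    {M : Matrix ι ι R} (hM : M ∈ S.matrix) {A : ℕ → Matrix ι ι R} (h1 : A 1 = M)
    (hS : ∀ m, 1 ≤ m → A (m + 1) = M.map f^[m] * A m) : ∀ m, 1 ≤ m → A m ∈ S.matrix := by
  intro m hm
  induction m, hm using Nat.le_induction with
  | base => rwa [h1]
  | succ m hm ih => rw [hS m hm]; exact mul_mem (fun i j => hf.iterate m (hM i j)) ih

end TwistedPowers

namespace RPhiProps

variable {K : Type} [Field K] {n : ℕ} {M M' : Matrix (Fin n) (Fin n) (LRose K n)}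
  {φ : LRose K n →ₐ[K] LRose K n}

theorem map_mem_rComponent (hφ : RPhiProps K n M M' φ)
    (hM : ∀ i j, M i j ∈ rComponent K n 0 ∧ M' i j ∈ rComponent K n 0)
    {d : ℤ} {x : LRose K n} (hx : x ∈ rComponent K n d) : φ x ∈ rComponent K n d := by
  let F : ℤ → Submodule K (LRose K n) := fun d => (rComponent K n d).comap φ.toLinearMap
  have : SetLike.GradedMonoid F :=
    { one_mem := show φ 1 ∈ _ by rw [map_one]; exact SetLike.one_mem_graded (rComponent K n)
      mul_mem := fun d e x y (hx : φ x ∈ rComponent K n d) (hy : φ y ∈ rComponent K n e) =>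
        show φ (x * y) ∈ _ by rw [map_mul]; exact SetLike.mul_mem_graded hx hy }
  refine rComponent_le (F := F) (fun i => ?_) (fun i => ?_) d hx
  · show φ (ee K n i) ∈ rComponent K n 1
    rw [hφ.1 i, ← add_zero 1]
    exact sum_mem fun k _ => SetLike.mul_mem_graded (ee_mem_rComponent k) (hM k i).1
  · show φ (gg K n i) ∈ rComponent K n (-1)
    rw [hφ.2 i, ← zero_add (-1)]
    exact sum_mem fun k _ => SetLike.mul_mem_graded (hM i k).2 (gg_mem_rComponent k)

theorem iterate_comp_ee (hφ : RPhiProps K n M M' φ) {A : ℕ → Matrix (Fin n) (Fin n) (LRose K n)}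
    (h1 : A 1 = M) (hS : ∀ m, 1 ≤ m → A (m + 1) = A m * M.map (⇑φ)^[m]) :
    ∀ t, 1 ≤ t → (⇑φ)^[t] ∘ ee K n = ee K n ᵥ* A t := by
  intro t ht
  induction t, ht using Nat.le_induction with
  | base => funext i; simp [hφ.1 i, h1, Matrix.vecMul, dotProduct]
  | succ t ht ih =>
    funext i
    rw [hS t ht, ← Matrix.vecMul_vecMul, ← ih, comp_apply, iterate_succ_apply, hφ.1 i,
      ← AlgHom.coe_pow, map_sum]
    simp [Matrix.vecMul, dotProduct]

theorem iterate_comp_gg (hφ : RPhiProps K n M M' φ) {A : ℕ → Matrix (Fin n) (Fin n) (LRose K n)}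
    (h1 : A 1 = M') (hS : ∀ m, 1 ≤ m → A (m + 1) = M'.map (⇑φ)^[m] * A m) :
    ∀ t, 1 ≤ t → (⇑φ)^[t] ∘ gg K n = A t *ᵥ gg K n := by
  intro t ht
  induction t, ht using Nat.le_induction with
  | base => funext i; simp [hφ.2 i, h1, Matrix.mulVec, dotProduct]
  | succ t ht ih =>
    funext i
    rw [hS t ht, ← Matrix.mulVec_mulVec, ← ih, comp_apply, iterate_succ_apply, hφ.2 i,
      ← AlgHom.coe_pow, map_sum]
    simp [Matrix.mulVec, dotProduct]

end RPhiProps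

section ZhangTwist

variable {K : Type} [Field K] {n : ℕ}

/-- The product of the Zhang twist `L^σ` is `a ⋆ b = a σ^m(b)` for `a` of degree `m`; here `σ'`
plays the role of `σ⁻¹`. -/
structure IsZhangTwistHom (θ : LRose K n →ₗ[K] LRose K n) (σ σ' : LRose K n →ₐ[K] LRose K n) :
    Prop where
  map_one : θ 1 = 1
  map_mul_of_nonneg : ∀ m : ℕ, ∀ a ∈ rComponent K n m, ∀ b, θ (a * b) = θ a * σ^[m] (θ b)
  map_mul_of_nonpos : ∀ m : ℕ, ∀ a ∈ rComponent K n (-m), ∀ b, θ (a * b) = θ a * σ'^[m] (θ b)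

namespace IsZhangTwistHom

variable {θ : LRose K n →ₗ[K] LRose K n} {σ σ' : LRose K n →ₐ[K] LRose K n}

theorem mul_iterate_mem (hθ : IsZhangTwistHom θ σ σ') {m : ℕ} {e : ℤ} {a b : LRose K n}
    (ha : a ∈ (rComponent K n m).map θ) (hb : b ∈ (rComponent K n e).map θ) :
    a * σ^[m] b ∈ (rComponent K n (m + e)).map θ := by
  obtain ⟨u, hu, rfl⟩ := ha
  obtain ⟨v, hv, rfl⟩ := hb
  exact ⟨u * v, SetLike.mul_mem_graded hu hv, hθ.map_mul_of_nonneg m u hu v⟩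

theorem mul_iterate_inv_mem (hθ : IsZhangTwistHom θ σ σ') {m : ℕ} {e : ℤ} {a b : LRose K n}
    (ha : a ∈ (rComponent K n (-m)).map θ) (hb : b ∈ (rComponent K n e).map θ) :
    a * σ'^[m] b ∈ (rComponent K n (-m + e)).map θ := by
  obtain ⟨u, hu, rfl⟩ := ha
  obtain ⟨v, hv, rfl⟩ := hb
  exact ⟨u * v, SetLike.mul_mem_graded hu hv, hθ.map_mul_of_nonpos m u hu v⟩

theorem one_mem (hθ : IsZhangTwistHom θ σ σ') : (1 : LRose K n) ∈ (rComponent K n 0).map θ :=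
  ⟨1, SetLike.one_mem_graded _, hθ.map_one⟩

theorem mul_mem_zero (hθ : IsZhangTwistHom θ σ σ') {e : ℤ} {a b : LRose K n}
    (ha : a ∈ (rComponent K n 0).map θ) (hb : b ∈ (rComponent K n e).map θ) :
    a * b ∈ (rComponent K n e).map θ := by
  simpa using hθ.mul_iterate_mem (m := 0) (by simpa using ha) hb

/-- On degree zero the twist is trivial, so the image of `L_0` is a subsemiring. -/
def rangeZero (hθ : IsZhangTwistHom θ σ σ') : Subsemiring (LRose K n) where
  carrier := (rComponent K n 0).map θ
  mul_mem' := hθ.mul_mem_zero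
  one_mem' := hθ.one_mem
  add_mem' := add_mem
  zero_mem' := zero_mem _

theorem ee_mul_mem (hθ : IsZhangTwistHom θ σ σ') (hσ : LeftInverse σ σ')
    (hθe : ∀ i, θ (ee K n i) = ee K n i) (i : Fin n) {d : ℤ} {y : LRose K n}
    (hy : σ' y ∈ (rComponent K n d).map θ) : ee K n i * y ∈ (rComponent K n (1 + d)).map θ := by
  have hi : ee K n i ∈ (rComponent K n (1 : ℕ)).map θ :=
    ⟨ee K n i, by simpa using ee_mem_rComponent i, hθe i⟩
  simpa [hσ y] using hθ.mul_iterate_mem hi hy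

theorem gg_mul_mem (hθ : IsZhangTwistHom θ σ σ') (hσ' : LeftInverse σ' σ)
    (hgg : ∀ i, gg K n i ∈ (rComponent K n (-1)).map θ) (i : Fin n) {d : ℤ} {y : LRose K n}
    (hy : σ y ∈ (rComponent K n d).map θ) : gg K n i * y ∈ (rComponent K n (-1 + d)).map θ := by
  have hi : gg K n i ∈ (rComponent K n (-(1 : ℕ))).map θ := by simpa using hgg i
  simpa [hσ' y] using hθ.mul_iterate_inv_mem hi hy

theorem vecMul_ee_mul_mem (hθ : IsZhangTwistHom θ σ σ') (hσ : LeftInverse σ σ')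
    (hθe : ∀ i, θ (ee K n i) = ee K n i) {A : Matrix (Fin n) (Fin n) (LRose K n)}
    (hA : ∀ k i, σ' (A k i) ∈ (rComponent K n 0).map θ) (i : Fin n) {d : ℤ} {y : LRose K n}
    (hy : σ' y ∈ (rComponent K n d).map θ) :
    (ee K n ᵥ* A) i * y ∈ (rComponent K n (1 + d)).map θ := by
  simp only [Matrix.vecMul, dotProduct, Finset.sum_mul, mul_assoc]
  exact sum_mem fun k _ =>
    hθ.ee_mul_mem hσ hθe k (by rw [map_mul]; exact hθ.mul_mem_zero (hA k i) hy)

theorem mulVec_gg_mul_mem (hθ : IsZhangTwistHom θ σ σ') (hσ' : LeftInverse σ' σ)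
    (hgg : ∀ i, gg K n i ∈ (rComponent K n (-1)).map θ) {B : Matrix (Fin n) (Fin n) (LRose K n)}
    (hB : ∀ i l, B i l ∈ (rComponent K n 0).map θ) (i : Fin n) {d : ℤ} {y : LRose K n}
    (hy : σ y ∈ (rComponent K n d).map θ) :
    (B *ᵥ gg K n) i * y ∈ (rComponent K n (-1 + d)).map θ := by
  simp only [Matrix.mulVec, dotProduct, Finset.sum_mul, mul_assoc]
  exact sum_mem fun l _ => hθ.mul_mem_zero (hB i l) (hθ.gg_mul_mem hσ' hgg l hy)

theorem gg_mem (hθ : IsZhangTwistHom θ σ σ') {Q Q' : Matrix (Fin n) (Fin n) (LRose K n)}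
    (hθg : ∀ i, θ (gg K n i) = ∑ k, Q' i k * gg K n k) (hQQ' : Q * Q' = 1)
    (hQ : ∀ i j, Q i j ∈ (rComponent K n 0).map θ) (i : Fin n) :
    gg K n i ∈ (rComponent K n (-1)).map θ := by
  have hgg : gg K n = Q *ᵥ (θ ∘ gg K n) := by
    rw [show θ ∘ gg K n = Q' *ᵥ gg K n from funext hθg, Matrix.mulVec_mulVec, hQQ',
      Matrix.one_mulVec]
  rw [hgg]
  simp only [Matrix.mulVec, dotProduct, comp_apply]
  exact sum_mem fun k _ =>
    hθ.mul_mem_zero (hQ i k) (Submodule.mem_map_of_mem (gg_mem_rComponent k))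

theorem iterate_inv_list_prod_ee_mem (hθ : IsZhangTwistHom θ σ σ') (hσ : LeftInverse σ σ')
    (hθe : ∀ i, θ (ee K n i) = ee K n i)
    (hA : ∀ t, 1 ≤ t → ∃ A : Matrix (Fin n) (Fin n) (LRose K n),
      σ'^[t] ∘ ee K n = ee K n ᵥ* A ∧ ∀ k i, σ' (A k i) ∈ (rComponent K n 0).map θ)
    (p : List (Fin n)) (t : ℕ) :
    σ'^[t] (p.map (ee K n)).prod ∈ (rComponent K n p.length).map θ := by
  induction p generalizing t with
  | nil => simpa [← AlgHom.coe_pow] using hθ.one_mem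
  | cons a p ih =>
    rw [List.map_cons, List.prod_cons, ← AlgHom.coe_pow, map_mul, AlgHom.coe_pow,
      List.length_cons, Nat.cast_succ, add_comm]
    have hy : σ' (σ'^[t] (p.map (ee K n)).prod) ∈ (rComponent K n p.length).map θ := by
      rw [← iterate_succ_apply' σ']
      exact ih (t + 1)
    obtain rfl | ht := t.eq_zero_or_pos
    · exact hθ.ee_mul_mem hσ hθe a hy
    · obtain ⟨A, hAt, hA0⟩ := hA t ht
      rw [← comp_apply (f := σ'^[t]), hAt]
      exact hθ.vecMul_ee_mul_mem hσ hθe hA0 a hy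

theorem iterate_list_prod_gg_mem (hθ : IsZhangTwistHom θ σ σ') (hσ' : LeftInverse σ' σ)
    (hgg : ∀ i, gg K n i ∈ (rComponent K n (-1)).map θ)
    (hB : ∀ s, 1 ≤ s → ∃ B : Matrix (Fin n) (Fin n) (LRose K n),
      σ^[s] ∘ gg K n = B *ᵥ gg K n ∧ ∀ i l, B i l ∈ (rComponent K n 0).map θ)
    (q : List (Fin n)) (s : ℕ) :
    σ^[s] (q.map (gg K n)).prod ∈ (rComponent K n (-q.length)).map θ := by
  induction q generalizing s with
  | nil => simpa [← AlgHom.coe_pow] using hθ.one_mem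
  | cons a q ih =>
    rw [List.map_cons, List.prod_cons, ← AlgHom.coe_pow, map_mul, AlgHom.coe_pow,
      List.length_cons, Nat.cast_succ, neg_add, add_comm]
    have hy : σ (σ^[s] (q.map (gg K n)).prod) ∈ (rComponent K n (-q.length)).map θ := by
      rw [← iterate_succ_apply' σ]
      exact ih (s + 1)
    obtain rfl | hs := s.eq_zero_or_pos
    · exact hθ.gg_mul_mem hσ' hgg a hy
    · obtain ⟨B, hBs, hB0⟩ := hB s hs
      rw [← comp_apply (f := σ^[s]), hBs]
      exact hθ.mulVec_gg_mul_mem hσ' hgg hB0 a hy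

theorem iterate_inv_list_prod_gg_mem (hθ : IsZhangTwistHom θ σ σ') (hσ : LeftInverse σ σ')
    (hσ' : LeftInverse σ' σ) (hgg : ∀ i, gg K n i ∈ (rComponent K n (-1)).map θ)
    (hB : ∀ s, 1 ≤ s → ∃ B : Matrix (Fin n) (Fin n) (LRose K n),
      σ^[s] ∘ gg K n = B *ᵥ gg K n ∧ ∀ i l, B i l ∈ (rComponent K n 0).map θ)
    (hC : ∀ t, 1 ≤ t → ∃ C : Matrix (Fin n) (Fin n) (LRose K n),
      σ'^[t] ∘ gg K n = C *ᵥ gg K n ∧ ∀ i l, C i l ∈ (rComponent K n 0).map θ)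
    (q : List (Fin n)) (t : ℕ) :
    σ'^[t] (q.map (gg K n)).prod ∈ (rComponent K n (-q.length)).map θ := by
  induction q generalizing t with
  | nil => simpa [← AlgHom.coe_pow] using hθ.one_mem
  | cons a q ih =>
    rcases t with _ | t
    · exact hθ.iterate_list_prod_gg_mem hσ' hgg hB (a :: q) 0
    rw [List.map_cons, List.prod_cons, ← AlgHom.coe_pow, map_mul, AlgHom.coe_pow,
      List.length_cons, Nat.cast_succ, neg_add, add_comm]
    have hy : σ (σ'^[t + 1] (q.map (gg K n)).prod) ∈ (rComponent K n (-q.length)).map θ := by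
      rw [iterate_succ_apply', hσ]
      exact ih t
    obtain ⟨C, hCt, hC0⟩ := hC (t + 1) t.succ_pos
    rw [← comp_apply (f := σ'^[t + 1]), hCt]
    exact hθ.mulVec_gg_mul_mem hσ' hgg hC0 a hy

theorem surjective (hθ : IsZhangTwistHom θ σ σ') (hσ : LeftInverse σ σ')
    (hσ' : LeftInverse σ' σ) (hθe : ∀ i, θ (ee K n i) = ee K n i)
    (hgg : ∀ i, gg K n i ∈ (rComponent K n (-1)).map θ)
    (hA : ∀ t, 1 ≤ t → ∃ A : Matrix (Fin n) (Fin n) (LRose K n),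
      σ'^[t] ∘ ee K n = ee K n ᵥ* A ∧ ∀ k i, σ' (A k i) ∈ (rComponent K n 0).map θ)
    (hB : ∀ s, 1 ≤ s → ∃ B : Matrix (Fin n) (Fin n) (LRose K n),
      σ^[s] ∘ gg K n = B *ᵥ gg K n ∧ ∀ i l, B i l ∈ (rComponent K n 0).map θ)
    (hC : ∀ t, 1 ≤ t → ∃ C : Matrix (Fin n) (Fin n) (LRose K n),
      σ'^[t] ∘ gg K n = C *ᵥ gg K n ∧ ∀ i l, C i l ∈ (rComponent K n 0).map θ) :
    Surjective θ := by
  have hcomp (d : ℤ) : rComponent K n d ≤ LinearMap.range θ := by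
    refine Submodule.span_le.2 ?_
    rintro _ ⟨p, q, rfl, rfl⟩
    have h := hθ.mul_iterate_mem (hθ.iterate_inv_list_prod_ee_mem hσ hθe hA p 0)
      (hθ.iterate_inv_list_prod_gg_mem hσ hσ' hgg hB hC q.reverse p.length)
    rw [hσ.iterate p.length] at h
    obtain ⟨x, -, hx⟩ := h
    exact ⟨x, hx⟩
  refine LinearMap.range_eq_top.1 (eq_top_iff.2 ?_)
  rw [← iSup_rComponent_eq_top K n]
  exact iSup_le hcomp

end IsZhangTwistHom

end ZhangTwist

theorem stmt13_general (K : Type) [Field K] (n : ℕ)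
    (P P' Q Q' : Matrix (Fin n) (Fin n) (LRose K n))
    (hP0 : ∀ i j, P i j ∈ rComponent K n 0 ∧ P' i j ∈ rComponent K n 0)
    (hQ0 : ∀ i j, Q i j ∈ rComponent K n 0 ∧ Q' i j ∈ rComponent K n 0)
    (hQQ' : Q * Q' = 1) (hQ'Q : Q' * Q = 1)
    (φP φQ : LRose K n →ₐ[K] LRose K n)
    (hφP : RPhiProps K n P P' φP) (hφQ : RPhiProps K n Q Q' φQ)
    (hinv : ∀ x, φP (φQ x) = x ∧ φQ (φP x) = x)
    (Pm' Qm Qm' : ℕ → Matrix (Fin n) (Fin n) (LRose K n))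
    (hPm'1 : Pm' 1 = P') (hPm'S : ∀ m, 1 ≤ m → Pm' (m + 1) = P'.map ((⇑φP)^[m]) * Pm' m)
    (hQm1 : Qm 1 = Q) (hQmS : ∀ m, 1 ≤ m → Qm (m + 1) = Qm m * Q.map ((⇑φQ)^[m]))
    (hQm'1 : Qm' 1 = Q') (hQm'S : ∀ m, 1 ≤ m → Qm' (m + 1) = Q'.map ((⇑φQ)^[m]) * Qm' m)
    (θ : LRose K n →ₗ[K] LRose K n)
    (hgr : ∀ d : ℤ, ∀ x ∈ rComponent K n d, θ x ∈ rComponent K n d)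
    (hone : θ 1 = 1)
    (hmulPos : ∀ m : ℕ, ∀ a ∈ rComponent K n (m : ℤ), ∀ b,
      θ (a * b) = θ a * (⇑φP)^[m] (θ b))
    (hmulNeg : ∀ m : ℕ, ∀ a ∈ rComponent K n (-(m : ℤ)), ∀ b,
      θ (a * b) = θ a * (⇑φQ)^[m] (θ b))
    (hθe : ∀ i, θ (ee K n i) = ee K n i)
    (hθg : ∀ i, θ (gg K n i) = ∑ k, Q' i k * gg K n k) :
    Function.Surjective ⇑θ ↔
      ∀ m : ℕ, 1 ≤ m → ∀ i j,
        Pm' m i j ∈ Set.range ⇑θ ∧ Qm m i j ∈ Set.range ⇑θ ∧ Qm' m i j ∈ Set.range ⇑θ := by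
  refine ⟨fun h _ _ _ _ => ⟨h _, h _, h _⟩, fun H => ?_⟩
  have hθ : IsZhangTwistHom θ φP φQ := ⟨hone, hmulPos, hmulNeg⟩
  let L₀ := SetLike.GradeZero.subsemiring (rComponent K n)
  have hrange {A : ℕ → Matrix (Fin n) (Fin n) (LRose K n)} (hA : ∀ m, 1 ≤ m → A m ∈ L₀.matrix)
      (hAθ : ∀ m, 1 ≤ m → ∀ i j, A m i j ∈ Set.range θ) (m : ℕ) (hm : 1 ≤ m) :
      A m ∈ hθ.rangeZero.matrix := fun i j =>
    mem_map_rComponent_of_mem_range hgr (hA m hm i j) (hAθ m hm i j)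
  have hQm := hrange (twistedPow_mem_matrix L₀ (fun _ hx => hφQ.map_mem_rComponent hQ0 hx)
    (fun i j => (hQ0 i j).1) hQm1 hQmS) fun m hm i j => (H m hm i j).2.1
  have hQm' := hrange (twistedPowInv_mem_matrix L₀ (fun _ hx => hφQ.map_mem_rComponent hQ0 hx)
    (fun i j => (hQ0 i j).2) hQm'1 hQm'S) fun m hm i j => (H m hm i j).2.2
  have hPm' := hrange (twistedPowInv_mem_matrix L₀ (fun _ hx => hφP.map_mem_rComponent hP0 hx)
    (fun i j => (hP0 i j).2) hPm'1 hPm'S) fun m hm i j => (H m hm i j).1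
  have hQ : Q ∈ hθ.rangeZero.matrix := hQm1 ▸ hQm 1 le_rfl
  have hQ' : Q' ∈ hθ.rangeZero.matrix := hQm'1 ▸ hQm' 1 le_rfl
  refine hθ.surjective (fun x => (hinv x).1) (fun x => (hinv x).2) hθe (hθ.gg_mem hθg hQQ' hQ)
    (fun t ht => ⟨Qm t, hφQ.iterate_comp_ee hQm1 hQmS t ht, ?_⟩)
    (fun s hs => ⟨Pm' s, hφP.iterate_comp_gg hPm'1 hPm'S s hs, hPm' s hs⟩)
    (fun t ht => ⟨Qm' t, hφQ.iterate_comp_gg hQm'1 hQm'S t ht, hQm' t ht⟩)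
  have hmap : (Qm t).map φQ = Q' * Qm (t + 1) := by
    rw [twistedPow_succ_eq_mul_map φQ.toRingHom hQm1 hQmS t ht, ← mul_assoc, hQ'Q, one_mul]
    rfl
  intro k i
  have h := mul_mem hQ' (hQm (t + 1) (by omega))
  rw [← hmap] at h
  exact h k i

/-- Let `P, Q ∈ GL_n(L_K(R_n)_0)` with `P φ_P(Q) = I_n` (so `φ_P` is a
graded automorphism with inverse `φ_Q`).  The graded injective homomorphism
`θ_P : L_K(R_n) → L_K(R_n)^{φ_P}` (determined by `θ_P(1) = 1`, `θ_P(e_i) = e_i`,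
`θ_P(e_i*) = Σ_k q^{(-1)}_{ik} e_k*`) is an isomorphism iff all entries
`p^{(-m)}_{ij}, q^{(m)}_{ij}, q^{(-m)}_{ij}` lie in its image for all `m ≥ 1`. -/
theorem stmt13 (K : Type) [Field K] (n : ℕ) (hn : 2 ≤ n)
    (P P' Q Q' : Matrix (Fin n) (Fin n) (LRose K n))
    (hP0 : ∀ i j, P i j ∈ rComponent K n 0 ∧ P' i j ∈ rComponent K n 0)
    (hQ0 : ∀ i j, Q i j ∈ rComponent K n 0 ∧ Q' i j ∈ rComponent K n 0)
    (hPP' : P * P' = 1) (hP'P : P' * P = 1) (hQQ' : Q * Q' = 1) (hQ'Q : Q' * Q = 1)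
    (φP φQ : LRose K n →ₐ[K] LRose K n)
    (hφP : RPhiProps K n P P' φP) (hφQ : RPhiProps K n Q Q' φQ)
    (hPQ : P * Q.map ⇑φP = 1)
    (hinv : ∀ x, φP (φQ x) = x ∧ φQ (φP x) = x)
    (Pm Pm' Qm Qm' : ℕ → Matrix (Fin n) (Fin n) (LRose K n))
    (hPm1 : Pm 1 = P) (hPmS : ∀ m, 1 ≤ m → Pm (m + 1) = Pm m * P.map ((⇑φP)^[m]))
    (hPm'1 : Pm' 1 = P') (hPm'S : ∀ m, 1 ≤ m → Pm' (m + 1) = P'.map ((⇑φP)^[m]) * Pm' m)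
    (hQm1 : Qm 1 = Q) (hQmS : ∀ m, 1 ≤ m → Qm (m + 1) = Qm m * Q.map ((⇑φQ)^[m]))
    (hQm'1 : Qm' 1 = Q') (hQm'S : ∀ m, 1 ≤ m → Qm' (m + 1) = Q'.map ((⇑φQ)^[m]) * Qm' m)
    (θ : LRose K n →ₗ[K] LRose K n)
    (hinj : Function.Injective ⇑θ)
    (hgr : ∀ d : ℤ, ∀ x ∈ rComponent K n d, θ x ∈ rComponent K n d)
    (hone : θ 1 = 1)
    (hmulPos : ∀ m : ℕ, ∀ a ∈ rComponent K n (m : ℤ), ∀ b,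
      θ (a * b) = θ a * (⇑φP)^[m] (θ b))
    (hmulNeg : ∀ m : ℕ, ∀ a ∈ rComponent K n (-(m : ℤ)), ∀ b,
      θ (a * b) = θ a * (⇑φQ)^[m] (θ b))
    (hθe : ∀ i, θ (ee K n i) = ee K n i)
    (hθg : ∀ i, θ (gg K n i) = ∑ k, Q' i k * gg K n k) :
    Function.Surjective ⇑θ ↔
      ∀ m : ℕ, 1 ≤ m → ∀ i j,
        Pm' m i j ∈ Set.range ⇑θ ∧ Qm m i j ∈ Set.range ⇑θ ∧ Qm' m i j ∈ Set.range ⇑θ :=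
  stmt13_general K n P P' Q Q' hP0 hQ0 hQQ' hQ'Q φP φQ hφP hφQ hinv Pm' Qm Qm' hPm'1 hPm'S hQm1 hQmS
    hQm'1 hQm'S θ hgr hone hmulPos hmulNeg hθe hθg
end

section
/- Let n ≥ 2 be an integer, K a field, and R_n the rose graph with n petals. Let P = (p_{ij}) ∈ GL_n(L_K(R_n)_0) satisfy φ_P(P) = P, and write P^{-1} = (p^{(-1)}_{ij}). Then the K-algebra homomorphism θ_P : L_K(R_n) → L_K(R_n)^{φ_P} defined by θ_P(v) = v, θ_P(e_i) = e_i and θ_P(e_i*) = Σ_{k=1}^n p_{ik} e_k* for 1 ≤ i ≤ n, is an isomorphism if and only if p_{ij} and p^{(-1)}_{ij} belong to the image of θ_P for all 1 ≤ i, j ≤ n. -/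
/-!
`θ` is graded, and the grading of `L_K(R_n)` is direct (it is detected by a coaction into
`L_K(R_n)[t, t⁻¹]`), so `θ` is injective as soon as it is injective on each homogeneous
component. There the relations `x = ∑ e_i e_i* x = ∑ x e_j e_j*` shorten monomials while staying
in the kernel, down to scalars, which `θ` fixes.

Conversely, if the entries of `P` and `P⁻¹` lie in the image `B` of `θ`, they lie in `θ(L_0)`,
and then `φ(e_i)`, `φ'(e_i)` and `e_i*` lie in `B`. Since `φ ∘ θ` and `φ' ∘ θ` are again
homomorphisms into the twist, `B` is stable under `φ` and `φ'`, and then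
`e_i y = θ(e_i) ⋆ φ'(y)` and `e_i* y = θ(t) ⋆ φ(y)` (where `θ(t) = e_i*`) show that `B` is a
left ideal containing `1`.
-/

theorem Matrix.map_eq_self_of_mul_eq_one {R : Type*} [Ring R] {m : Type*} [Fintype m]
    [DecidableEq m] (f : R →+* R) {P P' : Matrix m m R} (hP : P.map f = P) (h : P * P' = 1)
    (h' : P' * P = 1) : P'.map f = P' :=
  calc P'.map f = P' * P * P'.map f := by rw [h', Matrix.one_mul]
    _ = P' * (P * P').map f := by rw [Matrix.mul_assoc, Matrix.map_mul, hP]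
    _ = P' := by rw [h, Matrix.map_one f (map_zero f) (map_one f), Matrix.mul_one]

theorem Matrix.sum_mul_sum_mul_of_mul_eq_one {R : Type*} [Ring R] {m : Type*} [Fintype m]
    [DecidableEq m] {A B : Matrix m m R} (h : A * B = 1) (v : m → R) (i : m) :
    ∑ k, A i k * ∑ l, B k l * v l = v i := by
  have := congrFun (Matrix.mulVec_mulVec v A B) i
  rwa [h, Matrix.one_mulVec] at this

namespace LRose

variable {K : Type} [Field K] {n : ℕ}

theorem gg_mul_ee (i j : Fin n) : gg K n i * ee K n j = if i = j then 1 else 0 := by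
  split_ifs with h
  · subst h
    simpa [ee, gg] using RingQuot.mkAlgHom_rel K (RoseRel.ghostEdgeSame (K := K) i)
  · simpa [ee, gg] using RingQuot.mkAlgHom_rel K (RoseRel.ghostEdgeNe (K := K) i j h)

theorem sum_ee_mul_gg : ∑ i, ee K n i * gg K n i = 1 := by
  simpa [ee, gg] using RingQuot.mkAlgHom_rel K (RoseRel.ck2 (K := K) (n := n))

theorem sum_ee_mul_gg_mul (x : LRose K n) : ∑ i, ee K n i * (gg K n i * x) = x := by
  simp only [← mul_assoc, ← Finset.sum_mul, sum_ee_mul_gg, one_mul]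

theorem sum_mul_ee_mul_gg (x : LRose K n) : ∑ i, x * ee K n i * gg K n i = x := by
  simp only [mul_assoc, ← Finset.mul_sum, sum_ee_mul_gg, mul_one]

variable (K n) in
noncomputable def path (p : List (Fin n)) : LRose K n := (p.map (ee K n)).prod

variable (K n) in
/-- `q* = e_{qᵣ}* ⋯ e_{q₁}*` for `q = q₁ ⋯ qᵣ`, as in `rComponent`. -/
noncomputable def ghost (q : List (Fin n)) : LRose K n := (q.reverse.map (gg K n)).prod

@[simp] theorem path_nil : path K n [] = 1 := rfl

@[simp] theorem ghost_nil : ghost K n [] = 1 := rfl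

theorem path_cons (i : Fin n) (p : List (Fin n)) : path K n (i :: p) = ee K n i * path K n p := by
  simp [path]

theorem path_concat (p : List (Fin n)) (i : Fin n) :
    path K n (p ++ [i]) = path K n p * ee K n i := by
  simp [path]

theorem ghost_cons (i : Fin n) (q : List (Fin n)) :
    ghost K n (i :: q) = ghost K n q * gg K n i := by
  simp [ghost]

theorem ghost_concat (q : List (Fin n)) (i : Fin n) :
    ghost K n (q ++ [i]) = gg K n i * ghost K n q := by
  simp [ghost]

theorem gg_mul_path_cons (i j : Fin n) (p : List (Fin n)) :
    gg K n i * path K n (j :: p) = if i = j then path K n p else 0 := by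
  rw [path_cons, ← mul_assoc, gg_mul_ee]
  split_ifs <;> simp

theorem ghost_cons_mul_ee (i j : Fin n) (q : List (Fin n)) :
    ghost K n (i :: q) * ee K n j = if i = j then ghost K n q else 0 := by
  rw [ghost_cons, mul_assoc, gg_mul_ee]
  split_ifs <;> simp

theorem path_mul_ghost_mem {p q : List (Fin n)} {d : ℤ} (hd : (p.length : ℤ) - q.length = d) :
    path K n p * ghost K n q ∈ rComponent K n d :=
  Submodule.subset_span ⟨p, q, hd, rfl⟩

theorem rComponent_le_iff {d : ℤ} {N : Submodule K (LRose K n)} :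
    rComponent K n d ≤ N ↔
      ∀ p q : List (Fin n), (p.length : ℤ) - q.length = d → path K n p * ghost K n q ∈ N := by
  rw [rComponent, Submodule.span_le]
  constructor
  · exact fun h p q hd => h ⟨p, q, hd, rfl⟩
  · rintro h _ ⟨p, q, hd, rfl⟩
    exact h p q hd

theorem rComponent_le_of_mul_mem {N : ℤ → Submodule K (LRose K n)} (one : (1 : LRose K n) ∈ N 0)
    (ee_mul : ∀ i d x, x ∈ N d → ee K n i * x ∈ N (1 + d))
    (gg_mul : ∀ i d x, x ∈ N d → gg K n i * x ∈ N (-1 + d)) (d : ℤ) :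
    rComponent K n d ≤ N d := by
  have ghost_mem : ∀ r : List (Fin n), ghost K n r.reverse ∈ N (-r.length) := by
    intro r
    induction r with
    | nil => simpa using one
    | cons i r ih =>
      rw [List.reverse_cons, ghost_concat]
      convert gg_mul i _ _ ih using 2
      simp
  have mono_mem : ∀ p q : List (Fin n), path K n p * ghost K n q ∈ N (p.length - q.length) := by
    intro p q
    induction p with
    | nil => simpa using ghost_mem q.reverse
    | cons i p ih =>
      rw [path_cons, mul_assoc]
      convert ee_mul i _ _ ih using 2
      simp only [List.length_cons, Nat.cast_succ]
      ring
  exact rComponent_le_iff.2 fun p q hd => hd ▸ mono_mem p q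

theorem one_mem_rComponent : (1 : LRose K n) ∈ rComponent K n 0 := by
  simpa using path_mul_ghost_mem (K := K) (p := ([] : List (Fin n))) (q := []) rfl

theorem ee_mem_rComponent (i : Fin n) : ee K n i ∈ rComponent K n 1 := by
  simpa [path] using path_mul_ghost_mem (K := K) (p := [i]) (q := []) rfl

theorem gg_mem_rComponent (i : Fin n) : gg K n i ∈ rComponent K n (-1) := by
  simpa [ghost] using path_mul_ghost_mem (K := K) (p := []) (q := [i]) rfl

theorem ee_mul_mem_rComponent (i : Fin n) {d : ℤ} {x : LRose K n} (hx : x ∈ rComponent K n d) :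
    ee K n i * x ∈ rComponent K n (1 + d) := by
  refine (rComponent_le_iff (N := (rComponent K n (1 + d)).comap (LinearMap.mulLeft K _))).2
    (fun p q hd => ?_) hx
  show ee K n i * (path K n p * ghost K n q) ∈ rComponent K n (1 + d)
  rw [← mul_assoc, ← path_cons]
  exact path_mul_ghost_mem (by rw [← hd, List.length_cons, Nat.cast_succ]; ring)

theorem gg_mul_mem_rComponent (i : Fin n) {d : ℤ} {x : LRose K n} (hx : x ∈ rComponent K n d) :
    gg K n i * x ∈ rComponent K n (-1 + d) := by
  refine (rComponent_le_iff (N := (rComponent K n (-1 + d)).comap (LinearMap.mulLeft K _))).2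
    (fun p q hd => ?_) hx
  show gg K n i * (path K n p * ghost K n q) ∈ rComponent K n (-1 + d)
  cases p with
  | nil =>
    simpa [ghost_concat] using path_mul_ghost_mem (K := K) (p := []) (q := q ++ [i])
      (d := -1 + d) (by simp [← hd])
  | cons j p =>
    rw [← mul_assoc, gg_mul_path_cons]
    split_ifs
    · exact path_mul_ghost_mem (by rw [← hd, List.length_cons, Nat.cast_succ]; ring)
    · simp

theorem mul_mem_rComponent {d e : ℤ} {x y : LRose K n} (hx : x ∈ rComponent K n d)
    (hy : y ∈ rComponent K n e) : x * y ∈ rComponent K n (d + e) := by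
  refine rComponent_le_of_mul_mem (N := fun d => (rComponent K n (d + e)).comap
    (LinearMap.mulRight K y)) (by simpa using hy) (fun i d x hx => ?_) (fun i d x hx => ?_) d hx
  · simpa [mul_assoc, add_assoc] using ee_mul_mem_rComponent i hx
  · simpa [mul_assoc, add_assoc] using gg_mul_mem_rComponent i hx

theorem eq_top_of_mul_mem {N : Submodule K (LRose K n)} (one : (1 : LRose K n) ∈ N)
    (ee_mul : ∀ i, ∀ x ∈ N, ee K n i * x ∈ N) (gg_mul : ∀ i, ∀ x ∈ N, gg K n i * x ∈ N) :
    N = ⊤ := by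
  suffices h : ∀ a : LRose K n, ∀ x ∈ N, a * x ∈ N from
    eq_top_iff.2 fun a _ => by simpa using h a 1 one
  intro a
  obtain ⟨a, rfl⟩ := RingQuot.mkAlgHom_surjective K (RoseRel K n) a
  induction a using FreeAlgebra.induction with
  | grade0 r => intro x hx; simpa [Algebra.smul_def] using N.smul_mem r hx
  | grade1 z =>
    cases z with
    | e i => exact ee_mul i
    | g i => exact gg_mul i
  | mul a b ha hb => intro x hx; simpa [mul_assoc] using ha _ (hb x hx)
  | add a b ha hb => intro x hx; simpa [add_mul] using N.add_mem (ha x hx) (hb x hx)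

theorem iSup_rComponent : ⨆ d, rComponent K n d = ⊤ := by
  have mul_mem {a : LRose K n} {s : ℤ}
      (ha : ∀ d x, x ∈ rComponent K n d → a * x ∈ rComponent K n (s + d)) (x : LRose K n)
      (hx : x ∈ ⨆ d, rComponent K n d) : a * x ∈ ⨆ d, rComponent K n d := by
    refine Submodule.iSup_induction _ (motive := fun x => a * x ∈ ⨆ d, rComponent K n d) hx
      (fun d x hx => Submodule.mem_iSup_of_mem _ (ha d x hx)) (by simp) (fun x y hx hy => ?_)
    simpa [mul_add] using Submodule.add_mem _ hx hy
  exact eq_top_of_mul_mem (Submodule.mem_iSup_of_mem 0 one_mem_rComponent)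
    (fun i => mul_mem fun _ _ => ee_mul_mem_rComponent i)
    (fun i => mul_mem fun _ _ => gg_mul_mem_rComponent i)

open AddMonoidAlgebra

variable (K n) in
/-- The coaction `x ↦ ∑_d x_d ⊗ t^d` recording the `ℤ`-grading. -/
noncomputable def degreeCoaction : LRose K n →ₐ[K] AddMonoidAlgebra (LRose K n) ℤ :=
  RingQuot.liftAlgHom K ⟨FreeAlgebra.lift K fun
    | .e i => single 1 (ee K n i)
    | .g i => single (-1) (gg K n i), by
      rintro _ _ (i | ⟨i, j, h⟩ | _) <;>
        simp only [map_mul, map_sum, map_one, map_zero, FreeAlgebra.lift_ι_apply,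
          single_mul_single]
      · rw [gg_mul_ee, if_pos rfl, one_def, neg_add_cancel]
      · rw [gg_mul_ee, if_neg h, single_zero]
      · rw [one_def, ← sum_ee_mul_gg, add_neg_cancel]
        exact (map_sum (singleAddHom (0 : ℤ)) _ _).symm⟩

theorem degreeCoaction_ee (i : Fin n) : degreeCoaction K n (ee K n i) = single 1 (ee K n i) := by
  simp [degreeCoaction, ee]

theorem degreeCoaction_gg (i : Fin n) : degreeCoaction K n (gg K n i) = single (-1) (gg K n i) := by
  simp [degreeCoaction, gg]

theorem degreeCoaction_of_mem {d : ℤ} {x : LRose K n} (hx : x ∈ rComponent K n d) :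
    degreeCoaction K n x = single d x := by
  refine rComponent_le_of_mul_mem (N := fun d => LinearMap.eqLocus
    (degreeCoaction K n).toLinearMap (lsingle d)) ?_ (fun i d x hx => ?_) (fun i d x hx => ?_) d hx
  · simp [one_def, -LaurentPolynomial.single_eq_C_mul_T]
  · simp_all [degreeCoaction_ee, single_mul_single, -LaurentPolynomial.single_eq_C_mul_T]
  · simp_all [degreeCoaction_gg, single_mul_single, -LaurentPolynomial.single_eq_C_mul_T]

theorem mem_iSup_rComponent (x : LRose K n) : x ∈ ⨆ d, rComponent K n d :=
  iSup_rComponent (K := K) ▸ Submodule.mem_top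

variable (K n) in
noncomputable def component (d : ℤ) : LRose K n →ₗ[K] LRose K n where
  toFun x := (degreeCoaction K n x).coeff d
  map_add' x y := by simp
  map_smul' c x := by simp

theorem component_of_mem {d : ℤ} {x : LRose K n} (hx : x ∈ rComponent K n d) (e : ℤ) :
    component K n e x = if d = e then x else 0 := by
  simp [component, degreeCoaction_of_mem hx, Finsupp.single_apply,
    -LaurentPolynomial.single_eq_C_mul_T]

theorem component_mem (d : ℤ) (x : LRose K n) : component K n d x ∈ rComponent K n d := by
  refine Submodule.iSup_induction _ (motive := fun x => component K n d x ∈ rComponent K n d)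
    (mem_iSup_rComponent x)
    (fun e x hx => ?_) (by simp) (fun x y hx hy => by simpa using add_mem hx hy)
  rw [component_of_mem hx]
  split_ifs with h
  · exact h ▸ hx
  · exact zero_mem _

theorem eq_zero_of_forall_component_eq_zero {x : LRose K n} (h : ∀ d, component K n d x = 0) :
    x = 0 := by
  have sum_coeff : ∀ y : LRose K n,
      liftNC (AddMonoidHom.id _) 1 (degreeCoaction K n y) = y := by
    intro y
    refine Submodule.iSup_induction _ (motive := fun y =>
      liftNC (AddMonoidHom.id _) 1 (degreeCoaction K n y) = y) (mem_iSup_rComponent y)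
      (fun e y hy => ?_) (by simp) (fun y z hy hz => ?_)
    · simp [degreeCoaction_of_mem hy, -LaurentPolynomial.single_eq_C_mul_T]
    · simp [hy, hz]
  have hzero : degreeCoaction K n x = 0 := by
    ext d
    exact h d
  rw [← sum_coeff x, hzero, map_zero]

theorem component_map {f : LRose K n →ₗ[K] LRose K n} (hf : RGraded K n f) (d : ℤ)
    (x : LRose K n) : component K n d (f x) = f (component K n d x) := by
  refine Submodule.iSup_induction _ (motive := fun x =>
    component K n d (f x) = f (component K n d x)) (mem_iSup_rComponent x)
    (fun e x hx => ?_) (by simp) (fun x y hx hy => ?_)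
  · rw [component_of_mem hx, component_of_mem (hf e x hx)]
    split_ifs <;> simp
  · simp [hx, hy]

theorem injective_of_rGraded {f : LRose K n →ₗ[K] LRose K n} (hf : RGraded K n f)
    (hker : ∀ d, ∀ x ∈ rComponent K n d, f x = 0 → x = 0) : Function.Injective f := by
  refine (injective_iff_map_eq_zero f).2 fun x hx => eq_zero_of_forall_component_eq_zero fun d => ?_
  exact hker d _ (component_mem d x) (by rw [← component_map hf, hx, map_zero])

theorem exists_mem_rComponent_of_mem_range {f : LRose K n →ₗ[K] LRose K n} (hf : RGraded K n f)
    {d : ℤ} {y : LRose K n} (hy : y ∈ rComponent K n d) (hyf : y ∈ Set.range f) :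
    ∃ x ∈ rComponent K n d, f x = y := by
  obtain ⟨x, rfl⟩ := hyf
  refine ⟨component K n d x, component_mem d x, ?_⟩
  rw [← component_map hf, component_of_mem hy, if_pos rfl]

variable (K n) in
noncomputable def wordSpan (k l : ℕ) : Submodule K (LRose K n) :=
  Submodule.span K
    {x | ∃ p q : List (Fin n), p.length = k ∧ q.length = l ∧ x = path K n p * ghost K n q}

theorem path_mul_ghost_mem_wordSpan {p q : List (Fin n)} {k l : ℕ} (hp : p.length = k)
    (hq : q.length = l) : path K n p * ghost K n q ∈ wordSpan K n k l :=
  Submodule.subset_span ⟨p, q, hp, hq, rfl⟩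

theorem wordSpan_le_rComponent (k l : ℕ) : wordSpan K n k l ≤ rComponent K n (k - l) := by
  rw [wordSpan, Submodule.span_le]
  rintro _ ⟨p, q, rfl, rfl, rfl⟩
  exact path_mul_ghost_mem rfl

theorem wordSpan_zero_zero : wordSpan K n 0 0 = K ∙ 1 := by
  simp [wordSpan, List.length_eq_zero_iff]

theorem wordSpan_le_succ (k l : ℕ) : wordSpan K n k l ≤ wordSpan K n (k + 1) (l + 1) := by
  rw [wordSpan, Submodule.span_le]
  rintro _ ⟨p, q, rfl, rfl, rfl⟩
  rw [SetLike.mem_coe, ← mul_one (path K n p), ← sum_ee_mul_gg, Finset.mul_sum, Finset.sum_mul]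
  refine Submodule.sum_mem _ fun i _ => ?_
  rw [mul_assoc, mul_assoc, ← ghost_concat, ← mul_assoc, ← path_concat]
  exact path_mul_ghost_mem_wordSpan (by simp) (by simp)

theorem wordSpan_mono (k l t : ℕ) : wordSpan K n k l ≤ wordSpan K n (k + t) (l + t) := by
  induction t with
  | zero => rfl
  | succ t ih => exact ih.trans (wordSpan_le_succ _ _)

theorem exists_mem_wordSpan {d : ℤ} {x : LRose K n} (hx : x ∈ rComponent K n d) :
    ∃ k l : ℕ, (k : ℤ) - l = d ∧ x ∈ wordSpan K n k l := by
  induction hx using Submodule.span_induction with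
  | mem x hx =>
    obtain ⟨p, q, hd, rfl⟩ := hx
    exact ⟨p.length, q.length, hd, path_mul_ghost_mem_wordSpan rfl rfl⟩
  | zero => exact ⟨d.toNat, (-d).toNat, by omega, zero_mem _⟩
  | add x y _ _ hx hy =>
    obtain ⟨k, l, hkl, hx⟩ := hx
    obtain ⟨k', l', hkl', hy⟩ := hy
    refine ⟨k + k', l + k', by omega, add_mem (wordSpan_mono k l k' hx) ?_⟩
    have hl : l' + k = l + k' := by omega
    simpa [add_comm k, hl] using wordSpan_mono k' l' k hy
  | smul c x _ hx =>
    obtain ⟨k, l, hkl, hx⟩ := hx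
    exact ⟨k, l, hkl, Submodule.smul_mem _ c hx⟩

theorem gg_mul_mem_wordSpan (i : Fin n) {k l : ℕ} {x : LRose K n}
    (hx : x ∈ wordSpan K n (k + 1) l) : gg K n i * x ∈ wordSpan K n k l := by
  refine (Submodule.span_le (p := (wordSpan K n k l).comap (LinearMap.mulLeft K _))).2 ?_ hx
  rintro _ ⟨_ | ⟨j, p⟩, q, hp, rfl, rfl⟩
  · simp at hp
  · simp only [SetLike.mem_coe, Submodule.mem_comap, LinearMap.mulLeft_apply, ← mul_assoc,
      gg_mul_path_cons]
    split_ifs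
    · exact path_mul_ghost_mem_wordSpan (by simpa using hp) rfl
    · simp

theorem mul_ee_mem_wordSpan (j : Fin n) {k l : ℕ} {x : LRose K n}
    (hx : x ∈ wordSpan K n k (l + 1)) : x * ee K n j ∈ wordSpan K n k l := by
  refine (Submodule.span_le (p := (wordSpan K n k l).comap (LinearMap.mulRight K _))).2 ?_ hx
  rintro _ ⟨p, _ | ⟨i, q⟩, rfl, hq, rfl⟩
  · simp at hq
  · simp only [SetLike.mem_coe, Submodule.mem_comap, LinearMap.mulRight_apply, mul_assoc,
      ghost_cons_mul_ee]
    split_ifs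
    · exact path_mul_ghost_mem_wordSpan rfl (by simpa using hq)
    · simp

theorem _root_.RPhiProps.rGraded {Q Q' : Matrix (Fin n) (Fin n) (LRose K n)}
    {φ : LRose K n →ₐ[K] LRose K n} (h : RPhiProps K n Q Q' φ)
    (hQ : ∀ i j, Q i j ∈ rComponent K n 0) (hQ' : ∀ i j, Q' i j ∈ rComponent K n 0) :
    RGraded K n φ := by
  refine rComponent_le_of_mul_mem (N := fun d => (rComponent K n d).comap φ.toLinearMap)
    (by simpa using one_mem_rComponent) (fun i d x hx => ?_) (fun i d x hx => ?_)
  · rw [Submodule.mem_comap, AlgHom.toLinearMap_apply, map_mul, h.1]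
    refine mul_mem_rComponent (Submodule.sum_mem _ fun k _ => ?_) hx
    simpa using mul_mem_rComponent (ee_mem_rComponent k) (hQ k i)
  · rw [Submodule.mem_comap, AlgHom.toLinearMap_apply, map_mul, h.2]
    refine mul_mem_rComponent (Submodule.sum_mem _ fun k _ => ?_) hx
    simpa using mul_mem_rComponent (hQ' i k) (gg_mem_rComponent k)

/-- `θ` is a homomorphism `L_K(R_n) → L_K(R_n)^φ` into the Zhang twist by `φ`; on negative
degrees the twist is written with `φ'`, which plays the role of `φ⁻¹`. -/
structure IsZhangTwistHom (φ φ' : LRose K n →ₐ[K] LRose K n) (θ : LRose K n →ₗ[K] LRose K n) :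
    Prop where
  map_one : θ 1 = 1
  map_mul_of_nonneg : ∀ m : ℕ, ∀ a ∈ rComponent K n (m : ℤ), ∀ b,
    θ (a * b) = θ a * (⇑φ)^[m] (θ b)
  map_mul_of_nonpos : ∀ m : ℕ, ∀ a ∈ rComponent K n (-(m : ℤ)), ∀ b,
    θ (a * b) = θ a * (⇑φ')^[m] (θ b)

namespace IsZhangTwistHom

variable {φ φ' : LRose K n →ₐ[K] LRose K n} {θ : LRose K n →ₗ[K] LRose K n}

theorem map_mul_of_mem_zero (hθ : IsZhangTwistHom φ φ' θ) {a : LRose K n}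
    (ha : a ∈ rComponent K n 0) (b : LRose K n) :
    θ (a * b) = θ a * θ b :=
  hθ.map_mul_of_nonneg 0 a ha b

theorem map_mul_of_mem_one (hθ : IsZhangTwistHom φ φ' θ) {a : LRose K n}
    (ha : a ∈ rComponent K n 1) (b : LRose K n) : θ (a * b) = θ a * φ (θ b) :=
  hθ.map_mul_of_nonneg 1 a (by simpa using ha) b

theorem map_mul_of_mem_neg_one (hθ : IsZhangTwistHom φ φ' θ) {a : LRose K n}
    (ha : a ∈ rComponent K n (-1)) (b : LRose K n) : θ (a * b) = θ a * φ' (θ b) :=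
  hθ.map_mul_of_nonpos 1 a (by simpa using ha) b

theorem eq_zero_of_mem_wordSpan_zero (hθ : IsZhangTwistHom φ φ' θ) {l : ℕ} {x : LRose K n}
    (hx : x ∈ wordSpan K n 0 l) (hθx : θ x = 0) : x = 0 := by
  induction l generalizing x with
  | zero =>
    rw [wordSpan_zero_zero, Submodule.mem_span_singleton] at hx
    obtain ⟨c, rfl⟩ := hx
    rwa [map_smul, hθ.map_one] at hθx
  | succ l ih =>
    have hxdeg : x ∈ rComponent K n (-((l + 1 : ℕ) : ℤ)) := by
      simpa using wordSpan_le_rComponent 0 (l + 1) hx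
    rw [← sum_mul_ee_mul_gg x]
    refine Finset.sum_eq_zero fun j _ => ?_
    have hθxe : θ (x * ee K n j) = 0 := by rw [hθ.map_mul_of_nonpos _ x hxdeg, hθx, zero_mul]
    rw [ih (mul_ee_mem_wordSpan j hx) hθxe, zero_mul]

theorem eq_zero_of_mem_wordSpan (hθ : IsZhangTwistHom φ φ' θ) {k l : ℕ} {x : LRose K n}
    (hx : x ∈ wordSpan K n k l) (hθx : θ x = 0) : x = 0 := by
  induction k generalizing x with
  | zero => exact hθ.eq_zero_of_mem_wordSpan_zero hx hθx
  | succ k ih =>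
    rw [← sum_ee_mul_gg_mul x]
    refine Finset.sum_eq_zero fun i _ => ?_
    have hθgx : θ (gg K n i * x) = 0 := by
      rw [hθ.map_mul_of_mem_neg_one (gg_mem_rComponent i), hθx, map_zero, mul_zero]
    rw [ih (gg_mul_mem_wordSpan i hx) hθgx, mul_zero]

theorem rGraded (hθ : IsZhangTwistHom φ φ' θ) (hφ : RGraded K n φ) (hφ' : RGraded K n φ')
    (he : ∀ i, θ (ee K n i) ∈ rComponent K n 1) (hg : ∀ i, θ (gg K n i) ∈ rComponent K n (-1)) :
    RGraded K n θ := by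
  refine rComponent_le_of_mul_mem (N := fun d => (rComponent K n d).comap θ)
    (by simpa [hθ.map_one] using one_mem_rComponent) (fun i d x hx => ?_) (fun i d x hx => ?_)
  · rw [Submodule.mem_comap, hθ.map_mul_of_mem_one (ee_mem_rComponent i)]
    exact mul_mem_rComponent (he i) (hφ d _ hx)
  · rw [Submodule.mem_comap, hθ.map_mul_of_mem_neg_one (gg_mem_rComponent i)]
    exact mul_mem_rComponent (hg i) (hφ' d _ hx)

theorem injective (hθ : IsZhangTwistHom φ φ' θ) (hgr : RGraded K n θ) : Function.Injective θ :=
  injective_of_rGraded hgr fun _ _ hx hθx =>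
    let ⟨_, _, _, hx⟩ := exists_mem_wordSpan hx
    hθ.eq_zero_of_mem_wordSpan hx hθx

theorem mul_apply_mem_range_of_mem_one (hθ : IsZhangTwistHom φ φ' θ) {t : LRose K n}
    (ht : t ∈ rComponent K n 1) {y : LRose K n} (hy : y ∈ LinearMap.range θ) :
    θ t * φ y ∈ LinearMap.range θ := by
  obtain ⟨z, rfl⟩ := hy
  exact ⟨t * z, hθ.map_mul_of_mem_one ht z⟩

theorem mul_apply_mem_range_of_mem_neg_one (hθ : IsZhangTwistHom φ φ' θ) {t : LRose K n}
    (ht : t ∈ rComponent K n (-1)) {y : LRose K n} (hy : y ∈ LinearMap.range θ) :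
    θ t * φ' y ∈ LinearMap.range θ := by
  obtain ⟨z, rfl⟩ := hy
  exact ⟨t * z, hθ.map_mul_of_mem_neg_one ht z⟩

theorem apply_mem_range (hθ : IsZhangTwistHom φ φ' θ) (hθe : ∀ i, θ (ee K n i) = ee K n i)
    {ψ : LRose K n →ₐ[K] LRose K n} (hψφ : ∀ x, ψ (φ x) = φ (ψ x))
    (hψφ' : ∀ x, ψ (φ' x) = φ' (ψ x)) (he : ∀ i, ∃ t ∈ rComponent K n 1, θ t = ψ (ee K n i))
    (hg : ∀ i, ∃ t ∈ rComponent K n (-1), θ t = ψ (θ (gg K n i))) (x : LRose K n) :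
    ψ (θ x) ∈ LinearMap.range θ := by
  suffices h : (LinearMap.range θ).comap (ψ.toLinearMap ∘ₗ θ) = ⊤ from
    Submodule.mem_comap.1 (h ▸ Submodule.mem_top (x := x))
  refine eq_top_of_mul_mem ⟨1, by simp [hθ.map_one]⟩ (fun i x hx => ?_) (fun i x hx => ?_)
  · obtain ⟨t, ht, hθt⟩ := he i
    simp only [Submodule.mem_comap, LinearMap.comp_apply, AlgHom.toLinearMap_apply] at hx ⊢
    rw [hθ.map_mul_of_mem_one (ee_mem_rComponent i), map_mul, hθe, hψφ, ← hθt]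
    exact hθ.mul_apply_mem_range_of_mem_one ht hx
  · obtain ⟨t, ht, hθt⟩ := hg i
    simp only [Submodule.mem_comap, LinearMap.comp_apply, AlgHom.toLinearMap_apply] at hx ⊢
    rw [hθ.map_mul_of_mem_neg_one (gg_mem_rComponent i), map_mul, hψφ', ← hθt]
    exact hθ.mul_apply_mem_range_of_mem_neg_one ht hx

theorem surjective_of_apply_mem_range (hθ : IsZhangTwistHom φ φ' θ)
    (hθe : ∀ i, θ (ee K n i) = ee K n i)
    (hφφ' : ∀ x, φ (φ' x) = x) (hφ'φ : ∀ x, φ' (φ x) = x)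
    (hφ : ∀ x, φ (θ x) ∈ LinearMap.range θ) (hφ' : ∀ x, φ' (θ x) ∈ LinearMap.range θ)
    (hg : ∀ i, ∃ t ∈ rComponent K n (-1), θ t = gg K n i) : Function.Surjective θ := by
  rw [← LinearMap.range_eq_top]
  refine eq_top_of_mul_mem ⟨1, hθ.map_one⟩ (fun i y hy => ?_) (fun i y hy => ?_) <;>
    obtain ⟨x, rfl⟩ := hy
  · rw [← hφφ' (θ x), ← hθe]
    exact hθ.mul_apply_mem_range_of_mem_one (ee_mem_rComponent i) (hφ' x)
  · obtain ⟨t, ht, hθt⟩ := hg i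
    rw [← hφ'φ (θ x), ← hθt]
    exact hθ.mul_apply_mem_range_of_mem_neg_one ht (hφ x)

theorem exists_eq_sum_ee_mul (hθ : IsZhangTwistHom φ φ' θ) (hθe : ∀ i, θ (ee K n i) = ee K n i)
    {C : Matrix (Fin n) (Fin n) (LRose K n)} (hC : ∀ i j, ∃ c ∈ rComponent K n 0, θ c = C i j)
    (hfix : ∀ i j, φ (C i j) = C i j) (i : Fin n) :
    ∃ t ∈ rComponent K n 1, θ t = ∑ k, ee K n k * C k i := by
  choose c hc hθc using hC
  refine ⟨∑ k, ee K n k * c k i, Submodule.sum_mem _ fun k _ => ?_, ?_⟩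
  · simpa using mul_mem_rComponent (ee_mem_rComponent k) (hc k i)
  · simp [hθ.map_mul_of_mem_one (ee_mem_rComponent _), hθe, hθc, hfix]

theorem exists_eq_sum_mul_gg (hθ : IsZhangTwistHom φ φ' θ)
    {C : Matrix (Fin n) (Fin n) (LRose K n)} (hC : ∀ i j, ∃ c ∈ rComponent K n 0, θ c = C i j)
    (i : Fin n) : ∃ t ∈ rComponent K n (-1), θ t = ∑ k, C i k * θ (gg K n k) := by
  choose c hc hθc using hC
  refine ⟨∑ k, c i k * gg K n k, Submodule.sum_mem _ fun k _ => ?_, ?_⟩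
  · simpa using mul_mem_rComponent (hc i k) (gg_mem_rComponent k)
  · simp [hθ.map_mul_of_mem_zero (hc _ _), hθc]

theorem surjective_of_mem_range (hθ : IsZhangTwistHom φ φ' θ)
    {P P' : Matrix (Fin n) (Fin n) (LRose K n)}
    (hP0 : ∀ i j, P i j ∈ rComponent K n 0 ∧ P' i j ∈ rComponent K n 0)
    (hPP' : P * P' = 1) (hP'P : P' * P = 1)
    (hφP : RPhiProps K n P P' φ) (hφP' : RPhiProps K n P' P φ') (hfix : P.map ⇑φ = P)
    (hinv : ∀ x, φ (φ' x) = x ∧ φ' (φ x) = x) (hgr : RGraded K n θ)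
    (hθe : ∀ i, θ (ee K n i) = ee K n i)
    (hθg : ∀ i, θ (gg K n i) = ∑ k, P i k * gg K n k)
    (hr : ∀ i j, P i j ∈ Set.range ⇑θ ∧ P' i j ∈ Set.range ⇑θ) : Function.Surjective θ := by
  have fixP : ∀ i j, φ (P i j) = P i j := fun i j => congrFun₂ hfix i j
  have fixP' : ∀ i j, φ (P' i j) = P' i j := fun i j =>
    congrFun₂ (Matrix.map_eq_self_of_mul_eq_one φ.toRingHom hfix hPP' hP'P) i j
  have fix'P : ∀ i j, φ' (P i j) = P i j := fun i j => by
    conv_lhs => rw [← fixP]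
    exact (hinv _).2
  have hc : ∀ i j, ∃ c ∈ rComponent K n 0, θ c = P i j := fun i j =>
    exists_mem_rComponent_of_mem_range hgr (hP0 i j).1 (hr i j).1
  have hc' : ∀ i j, ∃ c ∈ rComponent K n 0, θ c = P' i j := fun i j =>
    exists_mem_rComponent_of_mem_range hgr (hP0 i j).2 (hr i j).2
  have hgg : ∀ i, ∃ t ∈ rComponent K n (-1), θ t = gg K n i := fun i => by
    simpa [hθg, Matrix.sum_mul_sum_mul_of_mul_eq_one hP'P] using hθ.exists_eq_sum_mul_gg hc' i
  have hφθg : ∀ i, φ (θ (gg K n i)) = gg K n i := fun i => by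
    simp [hθg, fixP, hφP.2, Matrix.sum_mul_sum_mul_of_mul_eq_one hPP']
  have hφ'θg : ∀ i, φ' (θ (gg K n i)) = ∑ k, P i k * θ (gg K n k) := fun i => by
    simp [hθg, fix'P, hφP'.2]
  have hφφ' : ∀ x, φ (φ' x) = φ' (φ x) := fun x => by rw [(hinv _).1, (hinv _).2]
  have hφB : ∀ x, φ (θ x) ∈ LinearMap.range θ := hθ.apply_mem_range hθe (fun _ => rfl) hφφ'
    (fun i => hφP.1 i ▸ hθ.exists_eq_sum_ee_mul hθe hc fixP i) (fun i => (hφθg i).symm ▸ hgg i)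
  have hφ'B : ∀ x, φ' (θ x) ∈ LinearMap.range θ :=
    hθ.apply_mem_range hθe (fun x => (hφφ' x).symm) (fun _ => rfl)
      (fun i => hφP'.1 i ▸ hθ.exists_eq_sum_ee_mul hθe hc' fixP' i)
      (fun i => hφ'θg i ▸ hθ.exists_eq_sum_mul_gg hc i)
  exact hθ.surjective_of_apply_mem_range hθe (fun x => (hinv x).1) (fun x => (hinv x).2) hφB hφ'B
    hgg

end IsZhangTwistHom

end LRose

theorem stmt14_general (K : Type) [Field K] (n : ℕ)
    (P P' : Matrix (Fin n) (Fin n) (LRose K n))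
    (hP0 : ∀ i j, P i j ∈ rComponent K n 0 ∧ P' i j ∈ rComponent K n 0)
    (hPP' : P * P' = 1) (hP'P : P' * P = 1)
    (φP φP' : LRose K n →ₐ[K] LRose K n)
    (hφP : RPhiProps K n P P' φP) (hφP' : RPhiProps K n P' P φP')
    (hfix : P.map ⇑φP = P)
    (hinv : ∀ x, φP (φP' x) = x ∧ φP' (φP x) = x)
    (θ : LRose K n →ₗ[K] LRose K n)
    (hone : θ 1 = 1)
    (hmulPos : ∀ m : ℕ, ∀ a ∈ rComponent K n (m : ℤ), ∀ b,
      θ (a * b) = θ a * (⇑φP)^[m] (θ b))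
    (hmulNeg : ∀ m : ℕ, ∀ a ∈ rComponent K n (-(m : ℤ)), ∀ b,
      θ (a * b) = θ a * (⇑φP')^[m] (θ b))
    (hθe : ∀ i, θ (ee K n i) = ee K n i)
    (hθg : ∀ i, θ (gg K n i) = ∑ k, P i k * gg K n k) :
    Function.Bijective ⇑θ ↔
      ∀ i j, P i j ∈ Set.range ⇑θ ∧ P' i j ∈ Set.range ⇑θ := by
  have hθ : LRose.IsZhangTwistHom φP φP' θ := ⟨hone, hmulPos, hmulNeg⟩
  have hφgr := hφP.rGraded (fun i j => (hP0 i j).1) (fun i j => (hP0 i j).2)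
  have hφ'gr := hφP'.rGraded (fun i j => (hP0 i j).2) (fun i j => (hP0 i j).1)
  have hgr : RGraded K n θ := hθ.rGraded hφgr hφ'gr
    (fun i => by rw [hθe]; exact LRose.ee_mem_rComponent i)
    (fun i => by rw [hθg, ← hφP'.2]; exact hφ'gr _ _ (LRose.gg_mem_rComponent i))
  exact ⟨fun h i j => ⟨h.2 _, h.2 _⟩, fun hr => ⟨hθ.injective hgr,
    hθ.surjective_of_mem_range hP0 hPP' hP'P hφP hφP' hfix hinv hgr hθe hθg hr⟩⟩

/-- Let `P ∈ GL_n(L_K(R_n)_0)` with `φ_P(P) = P` (so `φ_P` is a graded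
automorphism with inverse `φ_{P^{-1}}`).  The homomorphism
`θ_P : L_K(R_n) → L_K(R_n)^{φ_P}` determined by `θ_P(1) = 1`, `θ_P(e_i) = e_i`,
`θ_P(e_i*) = Σ_k p_{ik} e_k*` is an isomorphism iff all `p_{ij}` and `p^{(-1)}_{ij}` lie
in its image. -/
theorem stmt14 (K : Type) [Field K] (n : ℕ) (hn : 2 ≤ n)
    (P P' : Matrix (Fin n) (Fin n) (LRose K n))
    (hP0 : ∀ i j, P i j ∈ rComponent K n 0 ∧ P' i j ∈ rComponent K n 0)
    (hPP' : P * P' = 1) (hP'P : P' * P = 1)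
    (φP φP' : LRose K n →ₐ[K] LRose K n)
    (hφP : RPhiProps K n P P' φP) (hφP' : RPhiProps K n P' P φP')
    (hfix : P.map ⇑φP = P)
    (hinv : ∀ x, φP (φP' x) = x ∧ φP' (φP x) = x)
    (θ : LRose K n →ₗ[K] LRose K n)
    (hone : θ 1 = 1)
    (hmulPos : ∀ m : ℕ, ∀ a ∈ rComponent K n (m : ℤ), ∀ b,
      θ (a * b) = θ a * (⇑φP)^[m] (θ b))
    (hmulNeg : ∀ m : ℕ, ∀ a ∈ rComponent K n (-(m : ℤ)), ∀ b,
      θ (a * b) = θ a * (⇑φP')^[m] (θ b))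
    (hθe : ∀ i, θ (ee K n i) = ee K n i)
    (hθg : ∀ i, θ (gg K n i) = ∑ k, P i k * gg K n k) :
    Function.Bijective ⇑θ ↔
      ∀ i j, P i j ∈ Set.range ⇑θ ∧ P' i j ∈ Set.range ⇑θ :=
  stmt14_general K n P P' hP0 hPP' hP'P φP φP' hφP hφP' hfix hinv θ hone hmulPos hmulNeg hθe hθg
end
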